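/- For real-valued functions $Z_t$ on $\mathbb{R}$ (with suitable decay), the quantity $-\Im\, [Z_t,\mathbb H]\partial_{\alpha'}\bar Z_t$, where $\mathbb H$ is the Hilbert transform on the line, equals $\frac{1}{2\pi}\int \frac{|Z_t(\alpha')-Z_t(\beta')|^2}{(\alpha'-\beta')^2}\,d\beta'$, and in particular $A_1 := 1 - \Im\,[Z_t,\mathbb H]\partial_{\alpha'}\bar Z_t \ge 1$. -/

import Mathlib

open MeasureTheory Filter Complex

/-- Principal value: the truncated integrals of `f` away from the singularity `x`
tend to `L` as the truncation parameter tends to `0⁺`. -/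
def pvAt (f : ℝ → ℂ) (x : ℝ) (L : ℂ) : Prop :=
  Tendsto (fun ε : ℝ => ∫ y in {y : ℝ | ε < |x - y|}, f y)
    (nhdsWithin 0 (Set.Ioi 0)) (nhds L)

/-!
At `α` the commutator `[Zt, ℍ] ∂conj Zt` is the principal value of the kernel
`(Zt α - Zt β) conj (Zt' β) / (πi (α - β))`. As `Zt` is Lipschitz this kernel is integrable, so the
principal value is an ordinary integral. The imaginary part of the kernel is `φ'(β) / (2π (α - β))`
with `φ(β) = |Zt α - Zt β|²`. Since `φ` is bounded and vanishes to second order at `α`,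
integrating by parts on either side of `α` turns `∫ φ' / (α - β)` into `-∫ φ / (α - β)²`.
-/

open Topology NNReal ComplexConjugate

theorem measurableSet_lt_abs_sub (x ε : ℝ) : MeasurableSet {y : ℝ | ε < |x - y|} :=
  measurableSet_lt measurable_const (by fun_prop)

section PrincipalValue

variable {f g : ℝ → ℂ} {A B : ℂ}

theorem pvAt_unique {x : ℝ} (hA : pvAt f x A) (hB : pvAt f x B) : A = B :=
  tendsto_nhds_unique hA hB

theorem pvAt_integral (hf : Integrable f) (x : ℝ) : pvAt f x (∫ y, f y) := by
  unfold pvAt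
  simp_rw [← integral_indicator (measurableSet_lt_abs_sub x _)]
  refine tendsto_integral_filter_of_dominated_convergence (fun y => ‖f y‖)
    (.of_forall fun ε => hf.aestronglyMeasurable.indicator (measurableSet_lt_abs_sub x ε))
    (.of_forall fun ε => .of_forall fun y => norm_indicator_le_norm_self _ _) hf.norm ?_
  filter_upwards [Measure.ae_ne volume x] with y hy
  have hpos : 0 < |x - y| := abs_pos.mpr (sub_ne_zero.mpr hy.symm)
  refine tendsto_const_nhds.congr' ?_
  filter_upwards [nhdsWithin_le_nhds (Iio_mem_nhds hpos)] with ε hε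
  exact (Set.indicator_of_mem (s := {y : ℝ | ε < |x - y|}) hε f).symm

theorem pvAt.const_mul_sub {x : ℝ} (c : ℂ) (hf : pvAt f x A) (hg : pvAt g x B)
    (hfi : ∀ ε > 0, IntegrableOn f {y | ε < |x - y|})
    (hgi : ∀ ε > 0, IntegrableOn g {y | ε < |x - y|}) :
    pvAt (fun y => c * f y - g y) x (c * A - B) := by
  refine ((hf.const_mul c).sub hg).congr' ?_
  filter_upwards [self_mem_nhdsWithin] with ε (hε : 0 < ε)
  rw [integral_sub ((hfi ε hε).const_mul c) (hgi ε hε), integral_const_mul]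

end PrincipalValue

section HilbertKernel

variable {Z u : ℝ → ℂ}

theorem aestronglyMeasurable_div_const_mul_sub (hu : AEStronglyMeasurable u) (c : ℂ) (x : ℝ) :
    AEStronglyMeasurable fun y => u y / (c * ((x : ℂ) - y)) := by
  simp_rw [div_eq_mul_inv]
  exact hu.mul (by fun_prop : Measurable fun y : ℝ => (c * ((x : ℂ) - y))⁻¹).aestronglyMeasurable

theorem norm_div_const_mul_sub (w c : ℂ) (x y : ℝ) :
    ‖w / (c * ((x : ℂ) - y))‖ = ‖w‖ * ‖c‖⁻¹ * |x - y|⁻¹ := by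
  rw [← ofReal_sub, norm_div, norm_mul, norm_real, Real.norm_eq_abs, div_eq_mul_inv, mul_inv,
    mul_assoc]

theorem integrableOn_div_const_mul_sub (hu : Integrable u) (c : ℂ) (x : ℝ) {ε : ℝ} (hε : 0 < ε) :
    IntegrableOn (fun y => u y / (c * ((x : ℂ) - y))) {y | ε < |x - y|} := by
  refine Integrable.mono' ((hu.norm.const_mul (‖c‖⁻¹ * ε⁻¹)).integrableOn)
    (aestronglyMeasurable_div_const_mul_sub hu.aestronglyMeasurable c x).restrict ?_
  refine (ae_restrict_iff' (measurableSet_lt_abs_sub x ε)).mpr (.of_forall fun y hy => ?_)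
  rw [norm_div_const_mul_sub, mul_comm (‖c‖⁻¹ * ε⁻¹), ← mul_assoc]
  gcongr
  exact hy.le

theorem integrable_sub_mul_div_const_mul_sub {K : ℝ≥0} (hZ : LipschitzWith K Z)
    (hu : Integrable u) (c : ℂ) (x : ℝ) :
    Integrable fun y => (Z x - Z y) * u y / (c * ((x : ℂ) - y)) := by
  refine Integrable.mono' (hu.norm.const_mul (K * ‖c‖⁻¹)) ?_ (.of_forall fun y => ?_)
  · exact aestronglyMeasurable_div_const_mul_sub
      ((continuous_const.sub hZ.continuous).aestronglyMeasurable.mul hu.aestronglyMeasurable) c x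
  · rw [norm_div_const_mul_sub, norm_mul]
    have hlip : ‖Z x - Z y‖ ≤ K * |x - y| := hZ.norm_sub_le x y
    have hone : |x - y| * |x - y|⁻¹ ≤ 1 := mul_inv_le_one
    calc ‖Z x - Z y‖ * ‖u y‖ * ‖c‖⁻¹ * |x - y|⁻¹
        ≤ K * |x - y| * ‖u y‖ * ‖c‖⁻¹ * |x - y|⁻¹ := by gcongr
      _ = K * ‖c‖⁻¹ * ‖u y‖ * (|x - y| * |x - y|⁻¹) := by ring
      _ ≤ K * ‖c‖⁻¹ * ‖u y‖ := mul_le_of_le_one_right (by positivity) hone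

theorem pvAt_commutator_eq_integral {K : ℝ≥0} (hZ : LipschitzWith K Z) (hu : Integrable u)
    (hZu : Integrable fun y => Z y * u y) (c : ℂ) (x : ℝ) {A B : ℂ}
    (hA : pvAt (fun y => u y / (c * ((x : ℂ) - y))) x A)
    (hB : pvAt (fun y => Z y * u y / (c * ((x : ℂ) - y))) x B) :
    Z x * A - B = ∫ y, (Z x - Z y) * u y / (c * ((x : ℂ) - y)) := by
  have hsub := hA.const_mul_sub (Z x) hB (fun ε hε => integrableOn_div_const_mul_sub hu c x hε)
    (fun ε hε => integrableOn_div_const_mul_sub hZu c x hε)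
  refine pvAt_unique hsub ?_
  convert pvAt_integral (integrable_sub_mul_div_const_mul_sub hZ hu c x) x using 2 with y
  ring

end HilbertKernel

section IntegrationByParts

variable {φ φ' : ℝ → ℝ} {a C M : ℝ}

theorem integrable_div_sub_sq (hφ : Continuous φ) (hC : ∀ x, |φ x| ≤ C * (a - x) ^ 2)
    (hM : ∀ x, |φ x| ≤ M) : Integrable fun x => φ x / (a - x) ^ 2 := by
  have hC0 : 0 ≤ C := by simpa using (abs_nonneg _).trans (hC (a - 1))
  have hM0 : 0 ≤ M := (abs_nonneg _).trans (hM a)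
  refine ((integrable_inv_one_add_sq.comp_sub_right a).const_mul (C + M)).mono'
    (hφ.measurable.div (by fun_prop)).aestronglyMeasurable (.of_forall fun x => ?_)
  rw [Real.norm_eq_abs, abs_div, abs_of_nonneg (sq_nonneg (a - x)),
    show (x - a) ^ 2 = (a - x) ^ 2 by ring]
  rcases eq_or_ne x a with rfl | hx
  · simp only [sub_self, ne_eq, OfNat.ofNat_ne_zero, not_false_eq_true, zero_pow, div_zero]
    positivity
  · have hd : 0 < (a - x) ^ 2 := by positivity
    rw [← div_eq_mul_inv, div_le_div_iff₀ hd (by positivity)]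
    nlinarith [hC x, hM x, abs_nonneg (φ x)]

theorem tendsto_div_sub_cocompact (hM : ∀ x, |φ x| ≤ M) :
    Tendsto (fun x => φ x / (a - x)) (cocompact ℝ) (𝓝 0) := by
  have hdist : Tendsto (fun x => M * (dist a x)⁻¹) (cocompact ℝ) (𝓝 0) := by
    simpa using ((tendsto_dist_left_cocompact_atTop a).inv_tendsto_atTop).const_mul M
  refine squeeze_zero_norm (fun x => ?_) hdist
  rw [Real.norm_eq_abs, abs_div, Real.dist_eq, div_eq_mul_inv]
  gcongr
  exact hM x

theorem continuousAt_div_sub (hC : ∀ x, |φ x| ≤ C * (a - x) ^ 2) :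
    ContinuousAt (fun x => φ x / (a - x)) a := by
  have hlin : Tendsto (fun x => C * |a - x|) (𝓝 a) (𝓝 0) := by
    simpa using ((continuous_const.sub continuous_id : Continuous fun x : ℝ => a - x).abs.const_mul
      C).tendsto a
  simp only [ContinuousAt, sub_self, div_zero]
  refine squeeze_zero_norm (fun x => ?_) hlin
  rcases eq_or_ne x a with rfl | hx
  · simp only [sub_self, div_zero, norm_zero, abs_zero, mul_zero, le_refl]
  · have hd : 0 < |a - x| := abs_pos.mpr (sub_ne_zero.mpr hx.symm)
    rw [Real.norm_eq_abs, abs_div, div_le_iff₀ hd, mul_assoc, ← sq, sq_abs]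
    exact hC x

theorem integral_deriv_div_sub (hφ : ∀ x, HasDerivAt φ (φ' x) x)
    (hC : ∀ x, |φ x| ≤ C * (a - x) ^ 2) (hM : ∀ x, |φ x| ≤ M)
    (h' : Integrable fun x => φ' x / (a - x)) :
    ∫ x, φ' x / (a - x) = -∫ x, φ x / (a - x) ^ 2 := by
  have h'' := integrable_div_sub_sq (continuous_iff_continuousAt.mpr fun x => (hφ x).continuousAt)
    hC hM
  have hderiv : ∀ x ≠ a, HasDerivAt (fun x => φ x / (a - x)) (φ' x / (a - x) + φ x / (a - x) ^ 2) x := by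
    intro x hx
    have hd : a - x ≠ 0 := sub_ne_zero.mpr hx.symm
    refine ((hφ x).div ((hasDerivAt_id x).const_sub a) hd).congr_deriv ?_
    simp only [id]
    field_simp
    ring
  have hcont := continuousAt_div_sub (φ := φ) hC
  have hint : Integrable fun x => φ' x / (a - x) + φ x / (a - x) ^ 2 := h'.add h''
  have hIic := integral_Iic_of_hasDerivAt_of_tendsto hcont.continuousWithinAt (fun x hx => hderiv x hx.ne)
    hint.integrableOn ((tendsto_div_sub_cocompact hM).mono_left atBot_le_cocompact)
  have hIoi := integral_Ioi_of_hasDerivAt_of_tendsto hcont.continuousWithinAt (fun x hx => hderiv x hx.ne')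
    hint.integrableOn ((tendsto_div_sub_cocompact hM).mono_left atTop_le_cocompact)
  have htotal : ∫ x, (φ' x / (a - x) + φ x / (a - x) ^ 2) = 0 := by
    rw [← intervalIntegral.integral_Iic_add_Ioi hint.integrableOn hint.integrableOn, hIic, hIoi]
    ring
  rw [integral_add h' h''] at htotal
  linarith

end IntegrationByParts

theorem im_mul_conj_div_mul_I_mul (z w : ℂ) (r t : ℝ) :
    (z * conj w / (r * I * t)).im = -inner ℝ z w / (r * t) := by
  rw [show (r : ℂ) * I * t = ((r * t : ℝ) : ℂ) * I by push_cast; ring, div_mul_eq_div_div,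
    div_I, neg_im, mul_I_im, div_ofReal_re, ← real_inner_comm, Complex.inner, neg_div]

theorem neg_im_integral_commutator_kernel {Z Z' : ℝ → ℂ} {K : ℝ≥0} {B : ℝ}
    (hZ : ∀ x, HasDerivAt Z (Z' x) x) (hlip : LipschitzWith K Z) (hB : ∀ x, ‖Z x‖ ≤ B)
    (hZ' : Integrable Z') (x : ℝ) :
    -(∫ y, (Z x - Z y) * conj (Z' y) / (Real.pi * I * ((x : ℂ) - y))).im
      = 1 / (2 * Real.pi) * ∫ y, ‖Z x - Z y‖ ^ 2 / (x - y) ^ 2 := by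
  have hkernel : Integrable fun y => (Z x - Z y) * conj (Z' y) / (Real.pi * I * ((x : ℂ) - y)) :=
    integrable_sub_mul_div_const_mul_sub hlip
      (conjCLE.toContinuousLinearMap.integrable_comp hZ') (Real.pi * I) x
  have hφ : ∀ y, HasDerivAt (fun y => ‖Z x - Z y‖ ^ 2) (2 * inner ℝ (Z x - Z y) (-Z' y)) y :=
    fun y => ((hZ y).const_sub (Z x)).norm_sq
  have hC : ∀ y, |‖Z x - Z y‖ ^ 2| ≤ K ^ 2 * (x - y) ^ 2 := fun y => by
    rw [abs_of_nonneg (by positivity), ← sq_abs (x - y), ← mul_pow]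
    gcongr
    exact hlip.norm_sub_le x y
  have hM : ∀ y, |‖Z x - Z y‖ ^ 2| ≤ (B + B) ^ 2 := fun y => by
    rw [abs_of_nonneg (by positivity)]
    gcongr
    exact (norm_sub_le _ _).trans (add_le_add (hB x) (hB y))
  have him : ∀ y, ((Z x - Z y) * conj (Z' y) / (Real.pi * I * ((x : ℂ) - y))).im
      = 1 / (2 * Real.pi) * (2 * inner ℝ (Z x - Z y) (-Z' y) / (x - y)) := fun y => by
    rw [← ofReal_sub, im_mul_conj_div_mul_I_mul, inner_neg_right]
    field_simp
  have hderiv_int : Integrable fun y => 2 * inner ℝ (Z x - Z y) (-Z' y) / (x - y) := by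
    refine (hkernel.im.const_mul (2 * Real.pi)).congr (.of_forall fun y => ?_)
    simp only [RCLike.im_to_complex, him y]
    field_simp
  have hint_im : ∫ y, ((Z x - Z y) * conj (Z' y) / (Real.pi * I * ((x : ℂ) - y))).im
      = (∫ y, (Z x - Z y) * conj (Z' y) / (Real.pi * I * ((x : ℂ) - y))).im :=
    integral_im hkernel
  rw [← hint_im, integral_congr_ae (.of_forall him), integral_const_mul,
    integral_deriv_div_sub hφ hC hM hderiv_int]
  ring

theorem SchwartzMap.exists_lipschitzWith {F : Type*} [NormedAddCommGroup F] [NormedSpace ℝ F]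
    (f : SchwartzMap ℝ F) : ∃ K, LipschitzWith K f := by
  refine ⟨⟨SchwartzMap.seminorm ℝ 0 0 (SchwartzMap.derivCLM ℝ F f), apply_nonneg _ _⟩,
    lipschitzWith_of_nnnorm_deriv_le f.differentiable fun x => ?_⟩
  change ‖deriv f x‖ ≤ _
  rw [← SchwartzMap.derivCLM_apply ℝ]
  exact SchwartzMap.norm_le_seminorm ℝ _ x

theorem deriv_conj_comp {f : ℝ → ℂ} {x : ℝ} (hf : DifferentiableAt ℝ f x) :
    deriv (fun s => conj (f s)) x = conj (deriv f x) :=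
  hf.hasDerivAt.star.deriv

/-- For a Schwartz function `Zt` on `ℝ`, with `g = ∂(conj Zt)`, the quantity
`-Im [Zt, ℍ] ∂ conj Zt` equals `(1/2π) ∫ |Zt(α)-Zt(β)|²/(α-β)² dβ`, and hence
`A₁ = 1 - Im [Zt, ℍ] ∂ conj Zt ≥ 1`. -/
theorem stmt0 (Zt : SchwartzMap ℝ ℂ)
    (HZg Hprod : ℝ → ℂ)
    (hHZg : ∀ α : ℝ, pvAt (fun β : ℝ =>
      deriv (fun s : ℝ => (starRingEnd ℂ) (Zt s)) β /
        ((Real.pi : ℂ) * Complex.I * ((α : ℂ) - (β : ℂ)))) α (HZg α))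
    (hHprod : ∀ α : ℝ, pvAt (fun β : ℝ =>
      Zt β * deriv (fun s : ℝ => (starRingEnd ℂ) (Zt s)) β /
        ((Real.pi : ℂ) * Complex.I * ((α : ℂ) - (β : ℂ)))) α (Hprod α)) :
    ∀ α : ℝ,
      (-(Zt α * HZg α - Hprod α).im
          = (1 / (2 * Real.pi)) * ∫ β : ℝ, ‖Zt α - Zt β‖ ^ 2 / (α - β) ^ 2)
      ∧ 1 ≤ 1 - (Zt α * HZg α - Hprod α).im := by
  intro α
  obtain ⟨K, hlip⟩ := Zt.exists_lipschitzWith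
  have hB := SchwartzMap.norm_le_seminorm ℝ Zt
  have hderiv : Integrable (deriv Zt) := by
    simpa [funext (SchwartzMap.derivCLM_apply ℝ Zt)] using (SchwartzMap.derivCLM ℝ ℂ Zt).integrable
  have hg : deriv (fun s => conj (Zt s)) = fun s => conj (deriv Zt s) :=
    funext fun s => deriv_conj_comp (Zt.differentiable s)
  have hgint : Integrable fun s => conj (deriv Zt s) :=
    conjCLE.toContinuousLinearMap.integrable_comp hderiv
  have hrepr := pvAt_commutator_eq_integral hlip hgint
    (hgint.bdd_mul Zt.continuous.aestronglyMeasurable (.of_forall hB)) (Real.pi * I) α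
    (hg ▸ hHZg α) (hg ▸ hHprod α)
  have key : -(Zt α * HZg α - Hprod α).im
      = 1 / (2 * Real.pi) * ∫ β : ℝ, ‖Zt α - Zt β‖ ^ 2 / (α - β) ^ 2 := by
    rw [hrepr]
    exact neg_im_integral_commutator_kernel (fun x => (Zt.differentiable x).hasDerivAt) hlip hB
      hderiv α
  have hnonneg : 0 ≤ 1 / (2 * Real.pi) * ∫ β : ℝ, ‖Zt α - Zt β‖ ^ 2 / (α - β) ^ 2 :=
    mul_nonneg (by positivity) (integral_nonneg fun β => by positivity)
  exact ⟨key, by linarith⟩
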